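/- Suppose f is an n-ary operation on A(M) preserving all binary relations of A(M), g_1,…,g_n ∈ E (elements with content ≠ ·) with g_ℓ ∈ C (content in {0,A,B}), f(g_1,…,g_ℓ,…,g_n) = α ∈ Y (content ≠ ×), and f(g_1,…,X(g_ℓ),…,g_n) ∈ Y. Then f(g_1,…,X(g_ℓ),…,g_n) = α. -/

import Mathlib

namespace AMPaper

inductive Cnt
  | dot | times | zero | A | B
deriving DecidableEq

inductive Reg
  | A | B
deriving DecidableEq

/-- A Minsky machine instruction for a machine with states `{0,…,N}`:
`inc R j` is `(i,R,j)` and `dec R k j` is `(i,R,k,j)`. -/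
inductive Instr (N : ℕ)
  | inc : Reg → Fin (N + 1) → Instr N
  | dec : Reg → Fin (N + 1) → Fin (N + 1) → Instr N

/-- A Minsky machine with states `{0,…,N}` and exactly one instruction per state. -/
structure Minsky (N : ℕ) where
  instr : Fin (N + 1) → Instr N

/-- Elements of the universe `A(M)`: pairs `⟨i,c⟩` of a state and a content. -/
abbrev El (N : ℕ) := Fin (N + 1) × Cnt

/-- The content corresponding to a register. -/
def regCnt : Reg → Cnt
  | .A => Cnt.A
  | .B => Cnt.B

/-- The helper function `X(⟨i,c⟩) = ⟨i,×⟩`. -/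
def Xf {N : ℕ} (x : El N) : El N := (x.1, Cnt.times)

/-- The semilattice meet. -/
def meet {N : ℕ} (x y : El N) : El N :=
  if x = y then x else (min x.1 y.1, Cnt.times)

/-- The order induced by the meet: `x ≤ y` iff `x ∧ y = x`. -/
def elLe {N : ℕ} (x y : El N) : Prop := meet x y = x

/-- The operation `M(x,y)` of `A(M)`. -/
def Mop {N : ℕ} (m : Minsky N) (x y : El N) : El N :=
  if x.1 = y.1 then
    match m.instr x.1 with
    | .inc R j =>
        if x.2 = Cnt.dot ∧ y.2 = Cnt.zero then (j, regCnt R)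
        else if x.2 = Cnt.zero ∧ y.2 = Cnt.dot then (j, Cnt.dot)
        else if x = y ∧ x.2 ≠ Cnt.dot then (j, x.2)
        else (j, Cnt.times)
    | .dec R _ j =>
        if x.2 = Cnt.dot ∧ y.2 = regCnt R then (j, Cnt.zero)
        else if x.2 = regCnt R ∧ y.2 = Cnt.dot then (j, Cnt.dot)
        else if x = y ∧ x.2 ≠ Cnt.dot then (j, x.2)
        else (j, Cnt.times)
  else Xf y

/-- The operation `M'(x)` of `A(M)`. -/
def M'op {N : ℕ} (m : Minsky N) (x : El N) : El N :=
  match m.instr x.1 with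
  | .dec R k _ => if x.2 = regCnt R then (k, Cnt.times) else (k, x.2)
  | .inc _ _ => Xf x

/-- The operation `I(x,y)` of `A(M)`. -/
def Iop {N : ℕ} (x y : El N) : El N :=
  if x.2 = Cnt.dot then ((1 : Fin (N + 1)), Cnt.dot)
  else if y.2 = Cnt.zero ∨ y.2 = Cnt.A ∨ y.2 = Cnt.B then ((1 : Fin (N + 1)), Cnt.zero)
  else ((1 : Fin (N + 1)), Cnt.times)

/-- The operation `H(x)` of `A(M)`. -/
def Hop {N : ℕ} (x : El N) : El N :=
  if x = ((0 : Fin (N + 1)), Cnt.zero) ∨ x = ((0 : Fin (N + 1)), Cnt.dot)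
  then ((0 : Fin (N + 1)), Cnt.zero)
  else ((0 : Fin (N + 1)), Cnt.times)

/-- The operation `N₀(x,y,z)` of `A(M)`. -/
def N0op {N : ℕ} (x y z : El N) : El N :=
  if x = ((0 : Fin (N + 1)), Cnt.dot) ∧ y.1 = z.1 then y
  else if x = ((0 : Fin (N + 1)), Cnt.zero) ∧ z.2 ≠ Cnt.dot ∧ y.1 = z.1 then z
  else Xf (meet y z)

/-- The operation `S(x,y,z)` of `A(M)`. -/
def Sop {N : ℕ} (x y z : El N) : El N :=
  if x = ((1 : Fin (N + 1)), Cnt.zero) ∧ y.1 = (1 : Fin (N + 1)) ∧ z.1 = (1 : Fin (N + 1)) ∧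
      ((y.2 = Cnt.dot ∧ z.2 = Cnt.zero) ∨ (y.2 = Cnt.zero ∧ z.2 = Cnt.dot) ∨
        (y.2 = Cnt.zero ∧ z.2 = Cnt.zero))
  then ((1 : Fin (N + 1)), Cnt.zero)
  else ((1 : Fin (N + 1)), Cnt.times)

/-- The operation `N·(u,x,y,z)` of `A(M)`. -/
def Ndotop {N : ℕ} (u x y z : El N) : El N :=
  if x = y ∧ x.2 ≠ Cnt.times ∧ x.1 = z.1 then x
  else if u.2 = Cnt.dot ∧ y.2 = Cnt.times ∧ x.1 = y.1 ∧ y.1 = z.1 then x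
  else if u.2 = Cnt.dot ∧ x.2 = Cnt.times ∧ x.1 = y.1 ∧ y.1 = z.1 then y
  else if u.2 = Cnt.dot ∧ (z = x ∨ z = y) ∧ x.1 = y.1 ∧ y.1 = z.1 then z
  else Xf (meet x (meet y z))

/-- The operation `P(u,v,x,y)` of `A(M)`. -/
def Pop {N : ℕ} (u v x y : El N) : El N :=
  if u.1 = v.1 then x else y

/-- A subset `R ⊆ A(M)^ι` is a subpower if it is closed under all nine
fundamental operations of `A(M)` applied coordinatewise. -/
def IsSubpower {N : ℕ} (m : Minsky N) {ι : Type} (R : Set (ι → El N)) : Prop :=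
  (∀ a ∈ R, ∀ b ∈ R, (fun i => meet (a i) (b i)) ∈ R) ∧
  (∀ a ∈ R, ∀ b ∈ R, (fun i => Mop m (a i) (b i)) ∈ R) ∧
  (∀ a ∈ R, (fun i => M'op m (a i)) ∈ R) ∧
  (∀ a ∈ R, ∀ b ∈ R, (fun i => Iop (a i) (b i)) ∈ R) ∧
  (∀ a ∈ R, (fun i => Hop (a i)) ∈ R) ∧
  (∀ a ∈ R, ∀ b ∈ R, ∀ c ∈ R, (fun i => N0op (a i) (b i) (c i)) ∈ R) ∧
  (∀ a ∈ R, ∀ b ∈ R, ∀ c ∈ R, (fun i => Sop (a i) (b i) (c i)) ∈ R) ∧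
  (∀ u ∈ R, ∀ a ∈ R, ∀ b ∈ R, ∀ c ∈ R, (fun i => Ndotop (u i) (a i) (b i) (c i)) ∈ R) ∧
  (∀ u ∈ R, ∀ v ∈ R, ∀ a ∈ R, ∀ b ∈ R, (fun i => Pop (u i) (v i) (a i) (b i)) ∈ R)

/-- A tuple is synchronized if its state is constant across coordinates. -/
def Sync {N : ℕ} {ι : Type} (r : ι → El N) : Prop :=
  ∀ i j : ι, (r i).1 = (r j).1

/-- The subpower of `A(M)^ι` generated by a set `G`. -/
def Sg {N : ℕ} (m : Minsky N) {ι : Type} (G : Set (ι → El N)) : Set (ι → El N) :=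
  {x | ∀ R : Set (ι → El N), IsSubpower m R → G ⊆ R → x ∈ R}

/-- An `n`-ary operation `f` on `A(M)` preserves a relation `R ⊆ A(M)^ι` if
coordinatewise application of `f` to tuples from `R` lands in `R`. -/
def Preserves {N : ℕ} {n : ℕ} {ι : Type} (f : (Fin n → El N) → El N)
    (R : Set (ι → El N)) : Prop :=
  ∀ r : Fin n → ι → El N, (∀ j, r j ∈ R) → (fun i => f fun j => r j i) ∈ R


/-!
For `a ∈ E` the pairs `(a, a')` of `μ` are those with `a' ∈ {a, X(a)}`. Each basic operation of
`A(M)` preserves `μ`: on arguments from `E` none of the branches that test for content `·` fires,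
and every other branch returns either one of its arguments or a `×`-element at a state computed
from the states of the arguments. Hence the two outputs sit at the same state and differ at most
by the second having content `×`. As `f` preserves `μ` and `(g_j, g'_j) ∈ μ` for every `j`, where
`g' = g[ℓ ↦ X(g_ℓ)]`, the pair `(α, f(g'))` lies in `μ`; since `f(g') ∈ Y`, it equals `α`.
-/

variable {N : ℕ}

lemma Preserves.apply_rel {n : ℕ} {f : (Fin n → El N) → El N} {r : El N → El N → Prop}
    (hf : Preserves f {p : Fin 2 → El N | r (p 0) (p 1)}) {x y : Fin n → El N}
    (h : ∀ j, r (x j) (y j)) : r (f x) (f y) :=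
  hf (fun j => ![x j, y j]) h

def MuRel (a a' : El N) : Prop :=
  a.2 ≠ Cnt.dot ∧ (a' = a ∨ a' = Xf a)

def mu (N : ℕ) : Set (Fin 2 → El N) := {p | MuRel (p 0) (p 1)}

variable {a a' b b' c c' d d' u u' : El N}

namespace MuRel

lemma fst_eq (h : MuRel a a') : a'.1 = a.1 := by
  rcases h.2 with rfl | rfl <;> rfl

lemma snd_ne_dot (h : MuRel a a') : a'.2 ≠ Cnt.dot := by
  rcases h.2 with rfl | rfl
  · exact h.1
  · simp [Xf]

lemma eq_of_snd_ne_times (h : MuRel a a') (h' : a'.2 ≠ Cnt.times) : a' = a := by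
  rcases h.2 with rfl | rfl
  · rfl
  · exact absurd rfl h'

lemma mk_snd (h : MuRel a a') (i : Fin (N + 1)) : MuRel (i, a.2) (i, a'.2) := by
  rcases h with ⟨ha, rfl | rfl⟩
  · exact ⟨ha, Or.inl rfl⟩
  · exact ⟨ha, Or.inr rfl⟩

end MuRel

lemma muRel_self (ha : a.2 ≠ Cnt.dot) : MuRel a a := ⟨ha, Or.inl rfl⟩

lemma muRel_xf (ha : a.2 ≠ Cnt.dot) (h : b.1 = a.1) : MuRel a (Xf b) :=
  ⟨ha, Or.inr (by simp [Xf, h])⟩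

lemma muRel_xf_xf (h : b.1 = a.1) : MuRel (Xf a) (Xf b) :=
  ⟨by simp [Xf], Or.inl (by simp [Xf, h])⟩

lemma muRel_of_fst_eq (ha : a.2 ≠ Cnt.dot) (h1 : a'.1 = a.1)
    (h2 : a'.2 ≠ Cnt.times → a' = a) : MuRel a a' := by
  refine ⟨ha, ?_⟩
  by_cases ht : a'.2 = Cnt.times
  · exact Or.inr (Prod.ext h1 ht)
  · exact Or.inl (h2 ht)

lemma muRel_update_xf {n : ℕ} {g : Fin n → El N} (hg : ∀ i, (g i).2 ≠ Cnt.dot) (ℓ j : Fin n) :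
    MuRel (g j) (Function.update g ℓ (Xf (g ℓ)) j) := by
  rcases eq_or_ne j ℓ with rfl | hj
  · rw [Function.update_self]
    exact muRel_xf (hg j) rfl
  · rw [Function.update_of_ne hj]
    exact muRel_self (hg j)

lemma meet_fst (a b : El N) : (meet a b).1 = min a.1 b.1 := by
  unfold meet
  split_ifs with h
  · rw [h, min_self]
  · rfl

lemma meet_snd_ne_dot (ha : a.2 ≠ Cnt.dot) (b : El N) : (meet a b).2 ≠ Cnt.dot := by
  unfold meet
  split_ifs
  · exact ha
  · simp

lemma eq_of_meet_snd_ne_times (h : (meet a b).2 ≠ Cnt.times) : a = b := by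
  unfold meet at h
  split_ifs at h with hab
  · exact hab
  · exact absurd rfl h

lemma MuRel.meet (ha : MuRel a a') (hb : MuRel b b') : MuRel (meet a b) (meet a' b') := by
  refine muRel_of_fst_eq (meet_snd_ne_dot ha.1 b) ?_ fun h => ?_
  · rw [meet_fst, meet_fst, ha.fst_eq, hb.fst_eq]
  · have hab := eq_of_meet_snd_ne_times h
    have hsnd : a'.2 ≠ Cnt.times := by simpa [AMPaper.meet, hab] using h
    rw [ha.eq_of_snd_ne_times hsnd, hb.eq_of_snd_ne_times (hab ▸ hsnd)]

def Instr.next : Instr N → Fin (N + 1)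
  | .inc _ j => j
  | .dec _ _ j => j

/-- The branches of `M` that move a token all need an argument of content `·`. -/
lemma mop_of_snd_ne_dot (m : Minsky N) (ha : a.2 ≠ Cnt.dot) (hb : b.2 ≠ Cnt.dot)
    (h : a.1 = b.1) : Mop m a b = ((m.instr a.1).next, (meet a b).2) := by
  unfold Mop meet
  rcases m.instr a.1 with ⟨R, j⟩ | ⟨R, k, j⟩ <;> cases R <;>
    simp [h, Instr.next, regCnt, ha, hb] <;> split_ifs <;> simp_all

lemma MuRel.mop (m : Minsky N) (ha : MuRel a a') (hb : MuRel b b') :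
    MuRel (Mop m a b) (Mop m a' b') := by
  by_cases h : a.1 = b.1
  · have h' : a'.1 = b'.1 := by rw [ha.fst_eq, hb.fst_eq, h]
    rw [mop_of_snd_ne_dot m ha.1 hb.1 h, mop_of_snd_ne_dot m ha.snd_ne_dot hb.snd_ne_dot h',
      ha.fst_eq]
    exact (ha.meet hb).mk_snd _
  · have h' : a'.1 ≠ b'.1 := by rwa [ha.fst_eq, hb.fst_eq]
    simp only [Mop, if_neg h, if_neg h']
    exact muRel_xf_xf hb.fst_eq

lemma m'op_snd_ne_dot (m : Minsky N) (ha : a.2 ≠ Cnt.dot) : (M'op m a).2 ≠ Cnt.dot := by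
  unfold M'op Xf
  split
  · split_ifs <;> simp [ha]
  · simp

lemma m'op_xf (m : Minsky N) (a : El N) : M'op m (Xf a) = Xf (M'op m a) := by
  rcases hi : m.instr a.1 with ⟨R, j⟩ | ⟨R, k, j⟩ <;> cases R <;>
    simp only [M'op, Xf, hi, regCnt] <;> split_ifs <;> simp_all

lemma MuRel.m'op (m : Minsky N) (ha : MuRel a a') : MuRel (M'op m a) (M'op m a') := by
  rcases ha with ⟨ha, rfl | rfl⟩
  · exact muRel_self (m'op_snd_ne_dot m ha)
  · rw [m'op_xf]
    exact muRel_xf (m'op_snd_ne_dot m ha) rfl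

lemma MuRel.iop (ha : MuRel a a') (hb : MuRel b b') : MuRel (Iop a b) (Iop a' b') := by
  rcases ha with ⟨ha, rfl | rfl⟩ <;> rcases hb with ⟨hb, rfl | rfl⟩ <;>
    simp [MuRel, Iop, Xf, ha] <;> split_ifs <;> simp

lemma MuRel.hop (ha : MuRel a a') : MuRel (Hop a) (Hop a') := by
  rcases ha with ⟨ha, rfl | rfl⟩ <;>
    simp [MuRel, Hop, Xf] <;> split_ifs <;> simp

lemma n0op_of_snd_ne_dot (ha : a.2 ≠ Cnt.dot) (b : El N) (hc : c.2 ≠ Cnt.dot) :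
    N0op a b c = if a = (0, Cnt.zero) ∧ b.1 = c.1 then c else Xf (meet b c) := by
  have : a ≠ (0, Cnt.dot) := fun h => ha (by rw [h])
  simp [N0op, this, hc]

lemma n0op_fst (ha : a.2 ≠ Cnt.dot) (b : El N) (hc : c.2 ≠ Cnt.dot) :
    (N0op a b c).1 = min b.1 c.1 := by
  rw [n0op_of_snd_ne_dot ha b hc]
  split_ifs with h
  · rw [h.2, min_self]
  · exact meet_fst b c

lemma MuRel.n0op (ha : MuRel a a') (hb : MuRel b b') (hc : MuRel c c') :
    MuRel (N0op a b c) (N0op a' b' c') := by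
  have hsnd := n0op_of_snd_ne_dot ha.1 b hc.1
  have hsnd' := n0op_of_snd_ne_dot ha.snd_ne_dot b' hc.snd_ne_dot
  refine muRel_of_fst_eq ?_ ?_ fun h => ?_
  · rw [hsnd]
    split_ifs
    · exact hc.1
    · simp [Xf]
  · rw [n0op_fst ha.1 b hc.1, n0op_fst ha.snd_ne_dot b' hc.snd_ne_dot, hb.fst_eq, hc.fst_eq]
  · rw [hsnd'] at h ⊢
    split_ifs at h ⊢ with h'
    · obtain ⟨ha0, hbc⟩ := h'
      have ha' := ha.eq_of_snd_ne_times (by simp [ha0])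
      subst ha'
      rw [hsnd, if_pos ⟨ha0, by rw [← hb.fst_eq, ← hc.fst_eq, hbc]⟩]
      exact hc.eq_of_snd_ne_times h
    · exact absurd rfl h

lemma MuRel.sop (ha : MuRel a a') (hb : MuRel b b') (hc : MuRel c c') :
    MuRel (Sop a b c) (Sop a' b' c') := by
  rcases ha with ⟨ha, rfl | rfl⟩ <;> rcases hb with ⟨hb, rfl | rfl⟩ <;>
    rcases hc with ⟨hc, rfl | rfl⟩ <;>
    simp [MuRel, Sop, Xf, hb, hc] <;> split_ifs <;> simp_all

lemma ndotop_of_snd_ne_dot (hu : u.2 ≠ Cnt.dot) (a b c : El N) :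
    Ndotop u a b c =
      if a = b ∧ a.2 ≠ Cnt.times ∧ a.1 = c.1 then a else Xf (meet a (meet b c)) := by
  unfold Ndotop
  split_ifs <;> simp_all

lemma ndotop_fst (hu : u.2 ≠ Cnt.dot) (a b c : El N) :
    (Ndotop u a b c).1 = min a.1 (min b.1 c.1) := by
  rw [ndotop_of_snd_ne_dot hu]
  split_ifs with h
  · obtain ⟨rfl, -, h⟩ := h
    rw [← h, min_self, min_self]
  · simp only [Xf, meet_fst]

lemma MuRel.ndotop (hu : MuRel u u') (ha : MuRel a a') (hb : MuRel b b') (hc : MuRel c c') :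
    MuRel (Ndotop u a b c) (Ndotop u' a' b' c') := by
  have hsnd := ndotop_of_snd_ne_dot hu.1 a b c
  have hsnd' := ndotop_of_snd_ne_dot hu.snd_ne_dot a' b' c'
  refine muRel_of_fst_eq ?_ ?_ fun h => ?_
  · rw [hsnd]
    split_ifs
    · exact ha.1
    · simp [Xf]
  · rw [ndotop_fst hu.1, ndotop_fst hu.snd_ne_dot, ha.fst_eq, hb.fst_eq, hc.fst_eq]
  · rw [hsnd'] at h ⊢
    split_ifs at h ⊢ with h'
    · obtain ⟨hab, ht, hac⟩ := h'
      have ha' := ha.eq_of_snd_ne_times ht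
      have hb' := hb.eq_of_snd_ne_times (hab ▸ ht)
      subst ha' hb'
      rw [hsnd, if_pos ⟨hab, ht, hac.trans hc.fst_eq⟩]
    · exact absurd rfl h

lemma MuRel.pop (ha : MuRel a a') (hb : MuRel b b') (hc : MuRel c c') (hd : MuRel d d') :
    MuRel (Pop a b c d) (Pop a' b' c' d') := by
  unfold Pop
  rw [ha.fst_eq, hb.fst_eq]
  split_ifs
  · exact hc
  · exact hd

lemma mu_isSubpower (m : Minsky N) : IsSubpower m (mu N) :=
  ⟨fun _ ha _ hb => MuRel.meet ha hb,
   fun _ ha _ hb => MuRel.mop m ha hb,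
   fun _ ha => MuRel.m'op m ha,
   fun _ ha _ hb => MuRel.iop ha hb,
   fun _ ha => MuRel.hop ha,
   fun _ ha _ hb _ hc => MuRel.n0op ha hb hc,
   fun _ ha _ hb _ hc => MuRel.sop ha hb hc,
   fun _ hu _ ha _ hb _ hc => MuRel.ndotop hu ha hb hc,
   fun _ hu _ hv _ ha _ hb => MuRel.pop hu hv ha hb⟩

theorem f_E_monotone_general {N : ℕ} (mm : Minsky N) {n : ℕ}
    (f : (Fin n → El N) → El N)
    (hf : ∀ R : Set (Fin 2 → El N), IsSubpower mm R → Preserves f R)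
    (g : Fin n → El N) (hg : ∀ i, (g i).2 ≠ Cnt.dot)
    (ℓ : Fin n)
    (α : El N) (hα : f g = α)
    (hY : (f (Function.update g ℓ (Xf (g ℓ)))).2 ≠ Cnt.times) :
    f (Function.update g ℓ (Xf (g ℓ))) = α := by
  have hμ : MuRel (f g) (f (Function.update g ℓ (Xf (g ℓ)))) :=
    (hf (mu N) (mu_isSubpower mm)).apply_rel (muRel_update_xf hg ℓ)
  rw [← hα]
  exact hμ.eq_of_snd_ne_times hY

/-- If `f` preserves all binary relations of `A(M)`, `g₁,…,g_n ∈ E` with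
`g_ℓ ∈ C`, `f(ḡ) = α ∈ Y`, and replacing `g_ℓ` by `X(g_ℓ)` still yields an
output in `Y`, then that output equals `α` (Lemma: f is monotone on E). -/
theorem f_E_monotone {N : ℕ} (mm : Minsky N) {n : ℕ}
    (f : (Fin n → El N) → El N)
    (hf : ∀ R : Set (Fin 2 → El N), IsSubpower mm R → Preserves f R)
    (g : Fin n → El N) (hg : ∀ i, (g i).2 ≠ Cnt.dot)
    (ℓ : Fin n) (hℓ : (g ℓ).2 = Cnt.zero ∨ (g ℓ).2 = Cnt.A ∨ (g ℓ).2 = Cnt.B)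
    (α : El N) (hα : f g = α) (hαY : α.2 ≠ Cnt.times)
    (hY : (f (Function.update g ℓ (Xf (g ℓ)))).2 ≠ Cnt.times) :
    f (Function.update g ℓ (Xf (g ℓ))) = α :=
  f_E_monotone_general mm f hf g hg ℓ α hα hY

end AMPaper
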